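/- arXiv:1609.03184 — 6 statements merged into one kernel-verified Lean document; each statement's English description precedes it below -/
import Mathlib

section
/- If γ_c > 0 satisfies γ_c = ∑_{n=1}^N 1/(K/(1+γ_c) + Kη/λ_n) and γ_u > 0 satisfies γ_u = N/(K/(1+γ_u) + Kη), where λ_n > 0 with ∑ λ_n = N and K, η > 0, then γ_c ≤ γ_u. -/
/-!
The map `λ ↦ 1 / (a + b / λ) = λ / (a λ + b)` is concave, so by Jensen (here: its tangent line at
`λ = 1`, the mean of the trace-normalized eigenvalues) the correlated fixed-point map is dominated
by the uncorrelated one: `γ_c ≤ N / (K / (1 + γ_c) + K η)`, i.e. `h γ_c ≤ N = h γ_u` for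
`h γ = γ (K / (1 + γ) + K η)`. Since `h` is strictly increasing on `[0, ∞)`, `γ_c ≤ γ_u`.
-/

open Finset

lemma one_div_add_div_le_tangent {a b l : ℝ} (ha : 0 < a) (hb : 0 ≤ b) (hl : 0 < l) :
    1 / (a + b / l) ≤ 1 / (a + b) + b / (a + b) ^ 2 * (l - 1) := by
  have hal : 0 < a * l + b := by positivity
  have hab : 0 < a + b := by positivity
  have hgap : 1 / (a + b) + b / (a + b) ^ 2 * (l - 1) - 1 / (a + b / l)
      = a * b * (l - 1) ^ 2 / ((a * l + b) * (a + b) ^ 2) := by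
    field_simp
    ring
  have : 0 ≤ a * b * (l - 1) ^ 2 / ((a * l + b) * (a + b) ^ 2) := by positivity
  linarith

lemma sum_one_div_add_div_le {ι : Type*} (s : Finset ι) (l : ι → ℝ) (hl : ∀ i ∈ s, 0 < l i)
    (hsum : ∑ i ∈ s, l i = #s) {a b : ℝ} (ha : 0 < a) (hb : 0 ≤ b) :
    ∑ i ∈ s, 1 / (a + b / l i) ≤ #s / (a + b) := by
  have hcentered : ∑ i ∈ s, (l i - 1) = 0 := by simp [sum_sub_distrib, hsum]
  calc ∑ i ∈ s, 1 / (a + b / l i)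
      ≤ ∑ i ∈ s, (1 / (a + b) + b / (a + b) ^ 2 * (l i - 1)) :=
        sum_le_sum fun i hi => one_div_add_div_le_tangent ha hb (hl i hi)
    _ = #s / (a + b) := by
        rw [sum_add_distrib, ← mul_sum, hcentered]
        simp [div_eq_mul_inv]

lemma strictMonoOn_mul_div_one_add_add {K c : ℝ} (hK : 0 < K) (hc : 0 ≤ c) :
    StrictMonoOn (fun γ : ℝ => γ * (K / (1 + γ) + c)) (Set.Ici 0) := by
  intro x hx y hy hxy
  simp only [Set.mem_Ici] at hx hy
  have hfrac : x / (1 + x) < y / (1 + y) := by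
    rw [div_lt_div_iff₀ (by linarith) (by linarith)]
    linarith
  calc x * (K / (1 + x) + c) = K * (x / (1 + x)) + c * x := by ring
    _ < K * (y / (1 + y)) + c * y :=
        add_lt_add_of_lt_of_le (mul_lt_mul_of_pos_left hfrac hK) (mul_le_mul_of_nonneg_left hxy.le hc)
    _ = y * (K / (1 + y) + c) := by ring

theorem stmt_3_general (N : ℕ) (lam : Fin N → ℝ) (hlam : ∀ n, 0 < lam n)
    (hsum : ∑ n, lam n = (N : ℝ)) (K η : ℝ) (hK : 0 < K) (hη : 0 < η)
    (γc γu : ℝ) (hγc : 0 < γc) (hγu : 0 < γu)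
    (hc : γc = ∑ n, 1 / (K / (1 + γc) + K * η / lam n))
    (hu : γu = (N : ℝ) / (K / (1 + γu) + K * η)) :
    γc ≤ γu := by
  have hKη : 0 ≤ K * η := by positivity
  have hjensen : γc ≤ N / (K / (1 + γc) + K * η) := by
    have := sum_one_div_add_div_le univ lam (fun n _ => hlam n) (by simpa using hsum)
      (show 0 < K / (1 + γc) by positivity) hKη
    rwa [← hc, card_univ, Fintype.card_fin] at this
  have hc' : γc * (K / (1 + γc) + K * η) ≤ N := by
    rwa [le_div_iff₀ (by positivity)] at hjensen
  have hu' : γu * (K / (1 + γu) + K * η) = N := by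
    rwa [eq_div_iff (by positivity)] at hu
  exact (strictMonoOn_mul_div_one_add_add hK hKη).le_iff_le hγc.le hγu.le |>.mp (hu' ▸ hc')

theorem stmt_3 (N : ℕ) (hN : 0 < N) (lam : Fin N → ℝ) (hlam : ∀ n, 0 < lam n)
    (hsum : ∑ n, lam n = (N : ℝ)) (K η : ℝ) (hK : 0 < K) (hη : 0 < η)
    (γc γu : ℝ) (hγc : 0 < γc) (hγu : 0 < γu)
    (hc : γc = ∑ n, 1 / (K / (1 + γc) + K * η / lam n))
    (hu : γu = (N : ℝ) / (K / (1 + γu) + K * η)) :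
    γc ≤ γu :=
  stmt_3_general N lam hlam hsum K η hK hη γc γu hγc hγu hc hu
end

section
/- For η ≥ η₀ (where η₀ ≈ 0.3256 is the unique root of sqrt(η²+4η)·log((η+sqrt(η²+4η))/(2η)) = 1), the function f(x,η) = log(1+γ(x,η))/x is nonincreasing on [1, ∞), so its maximum over x ≥ 1 is attained at x = 1. -/
noncomputable def γRZF (x η : ℝ) : ℝ :=
  (x - η - 1 + Real.sqrt ((x + η - 1) ^ 2 + 4 * η)) / (2 * η)

open Real Set

namespace P12

noncomputable def Sf (η x : ℝ) : ℝ := Real.sqrt ((x + η - 1) ^ 2 + 4 * η)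
noncomputable def gf (η x : ℝ) : ℝ := Real.log ((x + η - 1 + Sf η x) / (2 * η))

lemma inner_pos {η : ℝ} (hη : 0 < η) (x : ℝ) : 0 < (x + η - 1) ^ 2 + 4 * η := by positivity

lemma Sf_pos {η : ℝ} (hη : 0 < η) (x : ℝ) : 0 < Sf η x := Real.sqrt_pos.2 (inner_pos hη x)

lemma Sf_sq {η : ℝ} (hη : 0 < η) (x : ℝ) : Sf η x ^ 2 = (x + η - 1) ^ 2 + 4 * η :=
  Real.sq_sqrt (inner_pos hη x).le

lemma num_pos {η : ℝ} (hη : 0 < η) (x : ℝ) : 0 < x + η - 1 + Sf η x := by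
  nlinarith [Sf_pos hη x, Sf_sq hη x]

lemma ratio_pos {η : ℝ} (hη : 0 < η) (x : ℝ) : 0 < (x + η - 1 + Sf η x) / (2 * η) :=
  div_pos (num_pos hη x) (by linarith)

lemma hasDerivAt_Sf {η : ℝ} (hη : 0 < η) (x : ℝ) :
    HasDerivAt (Sf η) ((x + η - 1) / Sf η x) x := by
  have h1 : HasDerivAt (fun x : ℝ => (x + η - 1) ^ 2 + 4 * η) (2 * (x + η - 1)) x := by
    have h0 : HasDerivAt (fun x : ℝ => x + η - 1) 1 x :=
      ((hasDerivAt_id x).add_const η).sub_const 1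
    have := (h0.pow 2).add_const (4 * η)
    refine this.congr_deriv ?_
    ring
  have h2 := h1.sqrt (ne_of_gt (inner_pos hη x))
  refine h2.congr_deriv ?_
  have hS := (Sf_pos hη x).ne'
  unfold Sf
  rw [eq_div_iff (by unfold Sf at hS; positivity)]
  unfold Sf at hS
  field_simp

lemma hasDerivAt_gf {η : ℝ} (hη : 0 < η) (x : ℝ) :
    HasDerivAt (gf η) (1 / Sf η x) x := by
  have hq : HasDerivAt (fun x => (x + η - 1 + Sf η x) / (2 * η))
      ((1 + (x + η - 1) / Sf η x) / (2 * η)) x := by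
    have h0 : HasDerivAt (fun x : ℝ => x + η - 1 + Sf η x) (1 + (x + η - 1) / Sf η x) x := by
      have h1 : HasDerivAt (fun x : ℝ => x + η - 1) 1 x :=
        ((hasDerivAt_id x).add_const η).sub_const 1
      exact h1.add (hasDerivAt_Sf hη x)
    exact h0.div_const (2 * η)
  have h2 := hq.log (ne_of_gt (ratio_pos hη x))
  refine h2.congr_deriv ?_
  have hS := Sf_pos hη x
  have hn := num_pos hη x
  field_simp
  ring

lemma gf_nonneg {η : ℝ} (hη : 0 < η) {x : ℝ} (hx : 0 ≤ x) : 0 ≤ gf η x := by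
  apply Real.log_nonneg
  rw [le_div_iff₀ (by linarith)]
  have h : 2 * η - (x + η - 1) ≤ Sf η x := by
    rcases le_or_gt (2 * η - (x + η - 1)) 0 with h | h
    · linarith [Sf_pos hη x]
    · rw [show Sf η x = Real.sqrt ((x + η - 1) ^ 2 + 4 * η) from rfl,
        Real.le_sqrt h.le (inner_pos hη x).le]
      nlinarith
  linarith

lemma hasDerivAt_padeF {t : ℝ} (ht : -1 < t) :
    HasDerivAt (fun t => Real.log (1 + t) - 2 * t / (2 + t))
      (1 / (1 + t) - 4 / (2 + t) ^ 2) t := by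
  have h1 : HasDerivAt (fun t : ℝ => 1 + t) 1 t := (hasDerivAt_id t).const_add 1
  have hlog : HasDerivAt (fun t : ℝ => Real.log (1 + t)) (1 / (1 + t)) t := by
    have := h1.log (by linarith)
    simpa using this
  have hnum : HasDerivAt (fun t : ℝ => 2 * t) 2 t := by
    simpa using (hasDerivAt_id t).const_mul 2
  have hden : HasDerivAt (fun t : ℝ => 2 + t) 1 t := (hasDerivAt_id t).const_add 2
  have hdiv := hnum.div hden (by linarith : (2:ℝ) + t ≠ 0)
  have := hlog.sub hdiv
  refine this.congr_deriv ?_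
  have h2 : (2:ℝ) + t ≠ 0 := by linarith
  field_simp
  ring

lemma pade {t : ℝ} (ht : 0 ≤ t) : 2 * t / (2 + t) ≤ Real.log (1 + t) := by
  have key : MonotoneOn (fun t => Real.log (1 + t) - 2 * t / (2 + t)) (Ici (0:ℝ)) := by
    apply monotoneOn_of_deriv_nonneg (convex_Ici 0)
    · intro y hy
      exact (hasDerivAt_padeF (by simp at hy; linarith)).continuousAt.continuousWithinAt
    · intro y hy
      rw [interior_Ici] at hy
      exact (hasDerivAt_padeF (by simp at hy; linarith)).differentiableAt.differentiableWithinAt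
    · intro y hy
      rw [interior_Ici] at hy
      simp only [mem_Ioi] at hy
      rw [(hasDerivAt_padeF (by linarith)).deriv]
      rw [sub_nonneg, div_le_div_iff₀ (by positivity) (by linarith)]
      nlinarith
  have h0 : (0:ℝ) ∈ Ici (0:ℝ) := self_mem_Ici
  have := key h0 (show t ∈ Ici (0:ℝ) from ht) ht
  simpa using this

noncomputable def s0 (η : ℝ) : ℝ := Real.sqrt (η ^ 2 + 4 * η)
noncomputable def Hf (η : ℝ) : ℝ := s0 η * Real.log ((η + s0 η) / (2 * η))

lemma s0_pos {η : ℝ} (hη : 0 < η) : 0 < s0 η := Real.sqrt_pos.2 (by nlinarith)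

lemma s0_sq {η : ℝ} (hη : 0 < η) : s0 η ^ 2 = η ^ 2 + 4 * η := Real.sq_sqrt (by nlinarith)

lemma s0_ge_two {η : ℝ} (hη : 0 < η) (h43 : η ≤ 4 / 3) : 2 * η ≤ s0 η := by
  have : Real.sqrt ((2 * η) ^ 2) ≤ s0 η := Real.sqrt_le_sqrt (by nlinarith)
  rwa [Real.sqrt_sq (by linarith)] at this

lemma Hf_eq (η : ℝ) : Hf η = Sf η 1 * gf η 1 := by
  have h : (1:ℝ) + η - 1 = η := by ring
  simp only [Hf, s0, Sf, gf, h]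

lemma ratio_eq {η : ℝ} (hη : 0 < η) :
    (η + s0 η) / (2 * η) = 1 + 2 / (η + s0 η) := by
  have h1 : 0 < η + s0 η := by linarith [s0_pos hη]
  field_simp
  linear_combination s0_sq hη

lemma L_lb {η : ℝ} (hη : 0 < η) :
    2 / (s0 η + η + 1) ≤ Real.log ((η + s0 η) / (2 * η)) := by
  have h1 : 0 < η + s0 η := by linarith [s0_pos hη]
  rw [ratio_eq hη]
  have hp := pade (t := 2 / (η + s0 η)) (by positivity)
  have heq : 2 * (2 / (η + s0 η)) / (2 + 2 / (η + s0 η)) = 2 / (s0 η + η + 1) := by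
    rw [div_eq_div_iff (by positivity) (by nlinarith [s0_pos hη])]
    field_simp
    ring
  rwa [heq] at hp

lemma hasDerivAt_s0 {η : ℝ} (hη : 0 < η) : HasDerivAt s0 ((η + 2) / s0 η) η := by
  have h1 : HasDerivAt (fun η : ℝ => η ^ 2 + 4 * η) (2 * η + 4) η := by
    have := (hasDerivAt_pow 2 η).add ((hasDerivAt_id η).const_mul 4)
    refine this.congr_deriv ?_
    norm_num
  have h2 := h1.sqrt (by nlinarith : η ^ 2 + 4 * η ≠ 0)
  refine h2.congr_deriv ?_
  have hs := s0_pos hη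
  have hs' : Real.sqrt (η ^ 2 + 4 * η) = s0 η := rfl
  rw [hs']
  field_simp
  ring

lemma hasDerivAt_L {η : ℝ} (hη : 0 < η) :
    HasDerivAt (fun η => Real.log ((η + s0 η) / (2 * η)))
      (-2 / (s0 η * (η + s0 η))) η := by
  have hs := s0_pos hη
  have hsum : 0 < η + s0 η := by linarith
  have hq : HasDerivAt (fun η : ℝ => (η + s0 η) / (2 * η))
      (((1 + (η + 2) / s0 η) * (2 * η) - (η + s0 η) * 2) / (2 * η) ^ 2) η := by
    have hnum : HasDerivAt (fun η : ℝ => η + s0 η) (1 + (η + 2) / s0 η) η :=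
      (hasDerivAt_id η).add (hasDerivAt_s0 hη)
    have hden : HasDerivAt (fun η : ℝ => 2 * η) 2 η := by
      simpa using (hasDerivAt_id η).const_mul 2
    exact hnum.div hden (by linarith)
  have h2 := hq.log (ne_of_gt (div_pos hsum (by linarith)))
  refine h2.congr_deriv ?_
  field_simp
  ring_nf
  linear_combination (-1) * s0_sq hη

lemma hasDerivAt_Hf {η : ℝ} (hη : 0 < η) :
    HasDerivAt Hf
      ((η + 2) / s0 η * Real.log ((η + s0 η) / (2 * η)) - 2 / (η + s0 η)) η := by
  have hs := s0_pos hη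
  have hsum : (0:ℝ) < η + s0 η := by linarith
  have h := (hasDerivAt_s0 hη).mul (hasDerivAt_L hη)
  refine h.congr_deriv ?_
  field_simp
  ring

lemma Hf_deriv_nonneg {η : ℝ} (hη : 0 < η) (h43 : η ≤ 4 / 3) :
    0 ≤ (η + 2) / s0 η * Real.log ((η + s0 η) / (2 * η)) - 2 / (η + s0 η) := by
  have hs := s0_pos hη
  have hsum : (0:ℝ) < η + s0 η := by linarith
  have hL := L_lb hη
  have h2 : 2 / (η + s0 η) ≤ (η + 2) / s0 η * (2 / (s0 η + η + 1)) := by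
    rw [div_mul_div_comm, div_le_div_iff₀ hsum (by positivity)]
    nlinarith [s0_ge_two hη h43, s0_sq hη]
  have h3 : (η + 2) / s0 η * (2 / (s0 η + η + 1)) ≤
      (η + 2) / s0 η * Real.log ((η + s0 η) / (2 * η)) := by
    apply mul_le_mul_of_nonneg_left hL (by positivity)
  linarith

lemma one_le_Hf {η₀ : ℝ} (hη₀pos : 0 < η₀)
    (hroot : Real.sqrt (η₀ ^ 2 + 4 * η₀) *
      Real.log ((η₀ + Real.sqrt (η₀ ^ 2 + 4 * η₀)) / (2 * η₀)) = 1)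
    {η : ℝ} (hη : η₀ ≤ η) : 1 ≤ Hf η := by
  have hηpos : 0 < η := lt_of_lt_of_le hη₀pos hη
  rcases le_or_gt (1 / 2) η with hhalf | hhalf
  · -- direct bound for η ≥ 1/2
    have hs := s0_pos hηpos
    have hsum : (0:ℝ) < η + s0 η := by linarith
    have hL := L_lb hηpos
    have hs1 : η + 1 ≤ s0 η := by
      have : Real.sqrt ((η + 1) ^ 2) ≤ s0 η := Real.sqrt_le_sqrt (by nlinarith)
      rwa [Real.sqrt_sq (by linarith)] at this
    have h1 : 1 ≤ s0 η * (2 / (s0 η + η + 1)) := by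
      rw [← mul_div_assoc, le_div_iff₀ (by positivity)]
      linarith
    have h2 : s0 η * (2 / (s0 η + η + 1)) ≤
        s0 η * Real.log ((η + s0 η) / (2 * η)) :=
      mul_le_mul_of_nonneg_left hL hs.le
    unfold Hf
    linarith
  · -- monotonicity on [η₀, 1/2]
    have hmono : MonotoneOn Hf (Icc η₀ (1 / 2)) := by
      apply monotoneOn_of_deriv_nonneg (convex_Icc _ _)
      · intro y hy
        exact (hasDerivAt_Hf (lt_of_lt_of_le hη₀pos hy.1)).continuousAt.continuousWithinAt
      · intro y hy
        rw [interior_Icc] at hy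
        exact (hasDerivAt_Hf (lt_trans hη₀pos hy.1)).differentiableAt.differentiableWithinAt
      · intro y hy
        rw [interior_Icc] at hy
        have hy0 : 0 < y := lt_trans hη₀pos hy.1
        rw [(hasDerivAt_Hf hy0).deriv]
        exact Hf_deriv_nonneg hy0 (by linarith [hy.2])
    have hmem₀ : η₀ ∈ Icc η₀ (1 / 2) := ⟨le_refl _, by linarith⟩
    have hmemη : η ∈ Icc η₀ (1 / 2) := ⟨hη, hhalf.le⟩
    have := hmono hmem₀ hmemη hη
    have hH0 : Hf η₀ = 1 := hroot
    linarith

lemma phi_mono {η : ℝ} (hη : 0 < η) :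
    MonotoneOn (fun x => Sf η x * gf η x - x) (Ici (1:ℝ)) := by
  have hd : ∀ x : ℝ, HasDerivAt (fun x => Sf η x * gf η x - x)
      ((x + η - 1) / Sf η x * gf η x + Sf η x * (1 / Sf η x) - 1) x := by
    intro x
    exact ((hasDerivAt_Sf hη x).mul (hasDerivAt_gf hη x)).sub (hasDerivAt_id x)
  apply monotoneOn_of_deriv_nonneg (convex_Ici 1)
  · intro y _; exact (hd y).continuousAt.continuousWithinAt
  · intro y _; exact (hd y).differentiableAt.differentiableWithinAt
  · intro y hy
    rw [interior_Ici] at hy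
    have hy1 : (1:ℝ) < y := hy
    rw [(hd y).deriv]
    have hS := Sf_pos hη y
    have hg := gf_nonneg hη (by linarith : (0:ℝ) ≤ y)
    have : Sf η y * (1 / Sf η y) = 1 := by field_simp
    rw [this]
    have hu : 0 < y + η - 1 := by linarith
    have : 0 ≤ (y + η - 1) / Sf η y * gf η y := by positivity
    linarith

lemma x_le_Sg {η : ℝ} (hη : 0 < η) (hkey : 1 ≤ Sf η 1 * gf η 1)
    {x : ℝ} (hx : 1 ≤ x) : x ≤ Sf η x * gf η x := by
  have := phi_mono hη (self_mem_Ici) (mem_Ici.2 hx) hx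
  simp only at this
  linarith

lemma main_antitone {η : ℝ} (hη : 0 < η) (hkey : 1 ≤ Sf η 1 * gf η 1) :
    AntitoneOn (fun x => gf η x / x) (Ici (1:ℝ)) := by
  apply antitoneOn_of_deriv_nonpos (convex_Ici 1)
  · apply ContinuousOn.div
    · intro y _; exact (hasDerivAt_gf hη y).continuousAt.continuousWithinAt
    · exact continuousOn_id
    · intro y hy; exact ne_of_gt (lt_of_lt_of_le one_pos hy)
  · intro y hy
    rw [interior_Ici] at hy
    have hy1 : (1:ℝ) < y := hy
    exact ((hasDerivAt_gf hη y).div (hasDerivAt_id' y) (by linarith)).differentiableAt.differentiableWithinAt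
  · intro y hy
    rw [interior_Ici] at hy
    have hy1 : (1:ℝ) < y := hy
    have hS := Sf_pos hη y
    rw [HasDerivAt.deriv (f := fun x => gf η x / x) ((hasDerivAt_gf hη y).div (hasDerivAt_id' y) (by linarith : (y:ℝ) ≠ 0))]
    apply div_nonpos_of_nonpos_of_nonneg _ (by positivity)
    have h1 : y ≤ Sf η y * gf η y := x_le_Sg hη hkey hy1.le
    have h2 : 1 / Sf η y * y ≤ gf η y := by
      rw [div_mul_eq_mul_div, one_mul, div_le_iff₀ hS]
      linarith
    nlinarith [h2]

end P12

theorem stmt_12 (η₀ : ℝ) (hη₀pos : 0 < η₀)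
    (hroot : Real.sqrt (η₀ ^ 2 + 4 * η₀) *
      Real.log ((η₀ + Real.sqrt (η₀ ^ 2 + 4 * η₀)) / (2 * η₀)) = 1)
    (η : ℝ) (hη : η₀ ≤ η) :
    AntitoneOn (fun x => Real.log (1 + γRZF x η) / x) (Set.Ici (1 : ℝ)) ∧
      ∀ x : ℝ, 1 ≤ x →
        Real.log (1 + γRZF x η) / x ≤ Real.log (1 + γRZF 1 η) / 1 := by
  have hηpos : 0 < η := lt_of_lt_of_le hη₀pos hη
  have hfun : ∀ x : ℝ, Real.log (1 + γRZF x η) = P12.gf η x := by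
    intro x
    unfold γRZF P12.gf P12.Sf
    congr 1
    field_simp
    ring
  have hkey : 1 ≤ P12.Sf η 1 * P12.gf η 1 := by
    rw [← P12.Hf_eq]
    exact P12.one_le_Hf hη₀pos hroot hη
  have hanti := P12.main_antitone hηpos hkey
  have heq : (fun x => Real.log (1 + γRZF x η) / x) = fun x => P12.gf η x / x := by
    funext x; rw [hfun x]
  constructor
  · rw [heq]
    exact hanti
  · intro x hx
    rw [hfun x, hfun 1, div_one]
    have := hanti (self_mem_Ici) (mem_Ici.2 hx) hx
    simpa using this
end

section
/- For η > 0 with η ≈ 0, the equation x/(x + η − 1) = log((x + η − 1)/η) in x > 1 has solution x* = 1 − η + η·e^{1 + W((1−η)/(ηe))}, where W is the principal branch of the Lambert W function. -/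
/-!
Substituting `x = 1 - η + η e^t` turns the right-hand side into `t` and the left-hand side into
`1 + (1 - η) / (η e^t)`, so `x` solves the equation exactly when `(t - 1) e^(t - 1) = (1 - η) / (η e)`,
i.e. when `t = 1 + W ((1 - η) / (η e))`.
-/

open Real

lemma one_sub_eq_of_mul_exp_eq {η w : ℝ} (hη : η ≠ 0)
    (hw : w * exp w = (1 - η) / (η * exp 1)) :
    1 - η = η * w * exp (1 + w) := by
  rw [exp_add, eq_div_iff (by positivity)] at *
  linear_combination -hw

lemma one_lt_one_sub_add_mul_exp {η t : ℝ} (hη : 0 < η) (ht : 0 < t) :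
    1 < 1 - η + η * exp t := by
  have : 1 < exp t := one_lt_exp_iff.mpr ht
  nlinarith

lemma div_eq_log_of_one_sub_eq {η t : ℝ} (hη : η ≠ 0) (ht : 1 - η = η * (t - 1) * exp t) :
    let x := 1 - η + η * exp t
    x / (x + η - 1) = log ((x + η - 1) / η) := by
  intro x
  have hden : x + η - 1 = η * exp t := by ring
  have hx : x = t * (η * exp t) := by simp only [x, ht]; ring
  rw [hden, hx, mul_div_cancel_right₀ _ (by positivity), mul_div_cancel_left₀ _ hη, log_exp]

theorem stmt_13 (W : ℝ → ℝ)
    (hW : ∀ z : ℝ, 0 ≤ z → 0 ≤ W z ∧ W z * Real.exp (W z) = z)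
    (η : ℝ) (hη : 0 < η) (hη1 : η < 1) :
    let x := 1 - η + η * Real.exp (1 + W ((1 - η) / (η * Real.exp 1)))
    1 < x ∧ x / (x + η - 1) = Real.log ((x + η - 1) / η) := by
  obtain ⟨hw0, hw⟩ := hW ((1 - η) / (η * exp 1)) (div_nonneg (by linarith) (by positivity))
  have ht := one_sub_eq_of_mul_exp_eq hη.ne' hw
  refine ⟨one_lt_one_sub_add_mul_exp hη (by linarith), div_eq_log_of_one_sub_eq hη.ne' ?_⟩
  rwa [add_sub_cancel_left]
end

section
/- The function η ↦ 1 − η + η·e^{1 + W((1−η)/(ηe))} is strictly increasing on (0, 1), where W is the principal Lambert W function. -/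
/-!
Put `t = 1 + W((1 - η)/(η e))`. The defining equation of `W` reads `η (t - 1) eᵗ = 1 - η`, and
eliminating `η` turns the function into `t / (t - 1 + e⁻ᵗ) = (1 - (1 - e⁻ᵗ)/t)⁻¹`. Here
`(1 - e⁻ᵗ)/t` is the slope of the convex function `exp` on `[-t, 0]`, so it decreases in `t`,
while `t` decreases in `η` because `W` is increasing.
-/

open Real Set

lemma one_sub_exp_neg_div_strictAntiOn :
    StrictAntiOn (fun t : ℝ => (1 - exp (-t)) / t) (Ioi 0) := by
  intro s (hs : 0 < s) t (ht : 0 < t) hst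
  have h := strictConvexOn_exp.secant_strict_mono (mem_univ 0) (mem_univ (-t)) (mem_univ (-s))
    (by linarith) (by linarith) (neg_lt_neg hst)
  simp only [exp_zero, sub_zero] at h
  rwa [← neg_div_neg_eq, neg_sub, neg_neg, ← neg_div_neg_eq (exp (-s) - 1), neg_sub, neg_neg] at h

lemma one_sub_exp_neg_div_lt_one {t : ℝ} (ht : 0 < t) : (1 - exp (-t)) / t < 1 := by
  rw [div_lt_one ht]
  linarith [add_one_lt_exp (neg_ne_zero.2 ht.ne')]

lemma inv_one_sub_one_sub_exp_neg_div_strictAntiOn :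
    StrictAntiOn (fun t : ℝ => (1 - (1 - exp (-t)) / t)⁻¹) (Ioi 0) := by
  intro s (hs : 0 < s) t (ht : 0 < t) hst
  have hlt := one_sub_exp_neg_div_strictAntiOn hs ht hst
  exact (inv_lt_inv₀ (by linarith [one_sub_exp_neg_div_lt_one ht])
    (by linarith [one_sub_exp_neg_div_lt_one hs])).2 (by linarith)

lemma one_sub_add_mul_exp_eq {η t : ℝ} (ht : 0 < t) (h : η * ((t - 1) * exp t) = 1 - η) :
    1 - η + η * exp t = (1 - (1 - exp (-t)) / t)⁻¹ := by
  have hpos : 0 < t - 1 + exp (-t) := by linarith [add_one_lt_exp (neg_ne_zero.2 ht.ne')]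
  have hexp : exp t * exp (-t) = 1 := by rw [← exp_add, add_neg_cancel, exp_zero]
  rw [show 1 - (1 - exp (-t)) / t = (t - 1 + exp (-t)) / t by field_simp; ring, inv_div,
    eq_div_iff hpos.ne']
  linear_combination (1 - exp (-t)) * h + η * t * hexp

lemma strictMonoOn_of_mul_exp_eq {W : ℝ → ℝ}
    (hW : ∀ z : ℝ, 0 ≤ z → 0 ≤ W z ∧ W z * exp (W z) = z) : StrictMonoOn W (Ici 0) := by
  intro a (ha : 0 ≤ a) b (hb : 0 ≤ b) hab
  by_contra! hle
  have : W b * exp (W b) ≤ W a * exp (W a) :=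
    mul_le_mul hle (exp_le_exp.2 hle) (exp_pos _).le (hW a ha).1
  rw [(hW a ha).2, (hW b hb).2] at this
  linarith

theorem stmt_14 (W : ℝ → ℝ)
    (hW : ∀ z : ℝ, 0 ≤ z → 0 ≤ W z ∧ W z * Real.exp (W z) = z) :
    StrictMonoOn
      (fun η : ℝ => 1 - η + η * Real.exp (1 + W ((1 - η) / (η * Real.exp 1))))
      (Set.Ioo (0 : ℝ) 1) := by
  set z : ℝ → ℝ := fun η => (1 - η) / (η * exp 1)
  have hz_nonneg : MapsTo z (Ioo 0 1) (Ici 0) := fun η hη =>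
    div_nonneg (sub_nonneg.2 hη.2.le) (mul_pos hη.1 (exp_pos 1)).le
  have hz_anti : StrictAntiOn z (Ioo 0 1) := by
    intro a ⟨ha0, _⟩ b ⟨hb0, hb1⟩ hab
    rw [div_lt_div_iff₀ (by positivity) (by positivity)]
    nlinarith [exp_pos 1]
  have ht_anti : StrictAntiOn (fun η => 1 + W (z η)) (Ioo 0 1) := fun a ha b hb hab =>
    (add_lt_add_iff_left 1).2 <|
      strictMonoOn_of_mul_exp_eq hW (hz_nonneg hb) (hz_nonneg ha) (hz_anti ha hb hab)
  have ht_pos : MapsTo (fun η => 1 + W (z η)) (Ioo 0 1) (Ioi 0) := fun η hη =>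
    show 0 < 1 + W (z η) by linarith [(hW _ (hz_nonneg hη)).1]
  refine (inv_one_sub_one_sub_exp_neg_div_strictAntiOn.comp ht_anti ht_pos).congr fun η hη => ?_
  have hw := (hW _ (hz_nonneg hη)).2
  refine (one_sub_add_mul_exp_eq (ht_pos hη) ?_).symm
  have hz : η * exp 1 * z η = 1 - η := mul_div_cancel₀ _ (mul_pos hη.1 (exp_pos 1)).ne'
  rw [exp_add, add_sub_cancel_left]
  linear_combination η * exp 1 * hw + hz
end

section
/- For every x > 3(2√3 − 3) ≈ 1.392 and every η > 0, the derivative ∂f(x,η)/∂x = 1/(x·sqrt((x+η−1)²+4η)) − (1/x²)·log((x+η−1+sqrt((x+η−1)²+4η))/(2η)) is strictly negative. -/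
/-!
Write `u` for the argument of the logarithm: it is the positive root of
`η u² = (x + η - 1) u + 1`, so `u > 1` and `√((x + η - 1)² + 4η) = 2ηu - (x + η - 1)`.
Eliminating `η` with the quadratic turns the claim into the one-variable inequality
`x u (u - 1) / ((x - 1) u² + 2u - 1) < log u` for `u > 1`. Both sides vanish at `u = 1`, and the
derivative of the difference is `(u - 1) Q(u) / (u D²)`, with `D` the denominator and
`Q(u) = ((x - 1) u - 2)² (u - 1/4) + ((x + 9)² - 108) u² / 4`, which is positive for `u > 1` once
`x + 9 > √108`, i.e. `x > 3 (2√3 - 3)`; at the threshold `Q` has a double root at `u = 2 / (x - 1)`.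
-/

open Real Set

noncomputable section

def loadRatio (c u : ℝ) : ℝ := c * u * (u - 1) / ((c - 1) * u ^ 2 + 2 * u - 1)

def rzfRoot (x η : ℝ) : ℝ := (x + η - 1 + √((x + η - 1) ^ 2 + 4 * η)) / (2 * η)

end

section LoadRatio

lemma one_lt_threshold : 1 < 3 * (2 * √3 - 3) := by
  have : 5 / 3 < √3 := by rw [lt_sqrt (by norm_num)]; norm_num
  linarith

lemma loadRatio_denom_pos {c u : ℝ} (hc : 1 ≤ c) (hu : 1 ≤ u) :
    0 < (c - 1) * u ^ 2 + 2 * u - 1 := by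
  nlinarith [mul_nonneg (sub_nonneg.2 hc) (sq_nonneg u)]

lemma hasDerivAt_log_sub_loadRatio {c u : ℝ} (hu : 0 < u)
    (hD : (c - 1) * u ^ 2 + 2 * u - 1 ≠ 0) :
    HasDerivAt (fun v => log v - loadRatio c v)
      (u⁻¹ - c * ((c + 1) * u ^ 2 - 2 * u + 1) / ((c - 1) * u ^ 2 + 2 * u - 1) ^ 2) u := by
  have hnum : HasDerivAt (fun v => c * v * (v - 1)) (c * (2 * u - 1)) u :=
    (((hasDerivAt_id' u).const_mul c).mul ((hasDerivAt_id' u).sub_const 1)).congr_deriv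
      (by ring)
  have hden : HasDerivAt (fun v => (c - 1) * v ^ 2 + 2 * v - 1) (2 * (c - 1) * u + 2) u :=
    ((((hasDerivAt_pow 2 u).const_mul (c - 1)).add
      ((hasDerivAt_id' u).const_mul 2)).sub_const 1).congr_deriv (by ring)
  exact ((hasDerivAt_log hu.ne').sub (hnum.div hden hD)).congr_deriv (by field_simp; ring)

lemma loadRatio_deriv_lt_inv {c u : ℝ} (hc1 : 1 < c) (hc : 108 < (c + 9) ^ 2) (hu : 1 < u) :
    c * ((c + 1) * u ^ 2 - 2 * u + 1) / ((c - 1) * u ^ 2 + 2 * u - 1) ^ 2 < u⁻¹ := by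
  have hD := loadRatio_denom_pos hc1.le hu.le
  have hQ : 0 < ((c - 1) * u - 2) ^ 2 * (u - 1 / 4) + ((c + 9) ^ 2 - 108) / 4 * u ^ 2 := by
    have : 0 < ((c + 9) ^ 2 - 108) / 4 * u ^ 2 := by
      apply mul_pos <;> nlinarith
    nlinarith [mul_nonneg (sq_nonneg ((c - 1) * u - 2)) (by linarith : (0 : ℝ) ≤ u - 1 / 4)]
  have key : ((c - 1) * u ^ 2 + 2 * u - 1) ^ 2 - c * u * ((c + 1) * u ^ 2 - 2 * u + 1) =
      (u - 1) * (((c - 1) * u - 2) ^ 2 * (u - 1 / 4) + ((c + 9) ^ 2 - 108) / 4 * u ^ 2) := by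
    ring
  rw [div_lt_iff₀ (by positivity), ← div_eq_inv_mul, lt_div_iff₀ (by linarith)]
  nlinarith [mul_pos (sub_pos.2 hu) hQ]

theorem loadRatio_lt_log {c u : ℝ} (hc : 3 * (2 * √3 - 3) < c) (hu : 1 < u) :
    loadRatio c u < log u := by
  have hc1 : 1 < c := one_lt_threshold.trans hc
  have hc108 : 108 < (c + 9) ^ 2 := by
    have h108 : (6 * √3) ^ 2 = 108 := by rw [mul_pow, sq_sqrt (by norm_num)]; norm_num
    nlinarith [sqrt_nonneg 3]
  have hderiv : ∀ v ∈ Ici (1 : ℝ), HasDerivAt (fun v => log v - loadRatio c v)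
      (v⁻¹ - c * ((c + 1) * v ^ 2 - 2 * v + 1) / ((c - 1) * v ^ 2 + 2 * v - 1) ^ 2) v :=
    fun v hv => hasDerivAt_log_sub_loadRatio (by linarith [mem_Ici.1 hv])
      (loadRatio_denom_pos hc1.le hv).ne'
  have hmono : StrictMonoOn (fun v => log v - loadRatio c v) (Ici 1) := by
    refine strictMonoOn_of_hasDerivWithinAt_pos (convex_Ici 1)
      (fun v hv => (hderiv v hv).continuousAt.continuousWithinAt)
      (fun v hv => (hderiv v (interior_subset hv)).hasDerivWithinAt) fun v hv => ?_
    rw [interior_Ici] at hv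
    exact sub_pos.2 (loadRatio_deriv_lt_inv hc1 hc108 hv)
  have := hmono self_mem_Ici hu.le hu
  simpa [loadRatio] using this

end LoadRatio

section RzfRoot

variable {x η : ℝ}

lemma sqrt_eq_of_rzfRoot (hη : 0 < η) :
    √((x + η - 1) ^ 2 + 4 * η) = 2 * η * rzfRoot x η - (x + η - 1) := by
  rw [rzfRoot]; field_simp; ring

lemma rzfRoot_quadratic (hη : 0 < η) :
    η * rzfRoot x η ^ 2 = (x + η - 1) * rzfRoot x η + 1 := by
  have hS := sqrt_eq_of_rzfRoot (x := x) hη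
  have hS2 := sq_sqrt (show 0 ≤ (x + η - 1) ^ 2 + 4 * η by positivity)
  rw [hS] at hS2
  nlinarith

lemma one_lt_rzfRoot (hx : 0 < x) (hη : 0 < η) : 1 < rzfRoot x η := by
  rw [rzfRoot, lt_div_iff₀ (by positivity), one_mul, ← sub_lt_iff_lt_add']
  rcases le_or_gt (2 * η - (x + η - 1)) 0 with h | h
  · exact h.trans_lt (sqrt_pos.2 (by positivity))
  · rw [lt_sqrt h.le]
    nlinarith

lemma div_sqrt_eq_loadRatio (hx : 0 < x) (hη : 0 < η) :
    x / √((x + η - 1) ^ 2 + 4 * η) = loadRatio x (rzfRoot x η) := by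
  set u := rzfRoot x η
  have hu : 1 < u := one_lt_rzfRoot hx hη
  have hD : (x - 1) * u ^ 2 + 2 * u - 1 = u * (u - 1) * √((x + η - 1) ^ 2 + 4 * η) := by
    rw [sqrt_eq_of_rzfRoot hη]
    linear_combination (1 - 2 * u) * rzfRoot_quadratic (x := x) hη
  have hu0 : u * (u - 1) ≠ 0 := by nlinarith
  rw [loadRatio, hD, mul_assoc, mul_comm x, mul_div_mul_left _ _ hu0]

end RzfRoot

theorem stmt_15 (x η : ℝ) (hx : 3 * (2 * Real.sqrt 3 - 3) < x) (hη : 0 < η) :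
    1 / (x * Real.sqrt ((x + η - 1) ^ 2 + 4 * η)) -
      (1 / x ^ 2) *
        Real.log ((x + η - 1 + Real.sqrt ((x + η - 1) ^ 2 + 4 * η)) / (2 * η)) < 0 := by
  have hx0 : 0 < x := one_pos.trans (one_lt_threshold.trans hx)
  have key : x / √((x + η - 1) ^ 2 + 4 * η) < log (rzfRoot x η) := by
    rw [div_sqrt_eq_loadRatio hx0 hη]
    exact loadRatio_lt_log hx (one_lt_rzfRoot hx0 hη)
  have hsplit : 1 / (x * √((x + η - 1) ^ 2 + 4 * η)) =
      1 / x ^ 2 * (x / √((x + η - 1) ^ 2 + 4 * η)) := by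
    field_simp
  rw [hsplit, ← mul_sub]
  exact mul_neg_of_pos_of_neg (by positivity) (sub_neg.2 key)
end

section
/- For fixed η > 0, the equation 1/(x·sqrt((x+η−1)²+4η)) = (1/x²)·log((x+η−1+sqrt((x+η−1)²+4η))/(2η)) has at most one solution x in (1, ∞). -/
open Real Set

theorem stmt_16 (η : ℝ) (hη : 0 < η) (x₁ x₂ : ℝ) (hx₁ : 1 < x₁) (hx₂ : 1 < x₂)
    (h₁ : 1 / (x₁ * Real.sqrt ((x₁ + η - 1) ^ 2 + 4 * η)) =
      (1 / x₁ ^ 2) *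
        Real.log ((x₁ + η - 1 + Real.sqrt ((x₁ + η - 1) ^ 2 + 4 * η)) / (2 * η)))
    (h₂ : 1 / (x₂ * Real.sqrt ((x₂ + η - 1) ^ 2 + 4 * η)) =
      (1 / x₂ ^ 2) *
        Real.log ((x₂ + η - 1 + Real.sqrt ((x₂ + η - 1) ^ 2 + 4 * η)) / (2 * η))) :
    x₁ = x₂ := by
  set g : ℝ → ℝ := fun x => x / Real.sqrt ((x + η - 1) ^ 2 + 4 * η)
      - Real.log ((x + η - 1 + Real.sqrt ((x + η - 1) ^ 2 + 4 * η)) / (2 * η)) with hg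
  have key : ∀ x : ℝ, 1 ≤ x → HasDerivAt g
      (-(x * (x + η - 1)) / (Real.sqrt ((x + η - 1) ^ 2 + 4 * η)) ^ 3) x := by
    intro x hx
    have hu : 0 < x + η - 1 := by linarith
    have hp : 0 < (x + η - 1) ^ 2 + 4 * η := by positivity
    set S := Real.sqrt ((x + η - 1) ^ 2 + 4 * η) with hSdef
    have hS : 0 < S := Real.sqrt_pos.mpr hp
    have h1 : HasDerivAt (fun y : ℝ => y + η - 1) 1 x := by
      simpa using ((hasDerivAt_id x).add_const η).sub_const 1
    have hpoly : HasDerivAt (fun y : ℝ => (y + η - 1) ^ 2 + 4 * η) (2 * (x + η - 1)) x := by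
      have := (h1.pow 2).add_const (4 * η)
      refine this.congr_deriv ?_
      ring
    have hsqrt : HasDerivAt (fun y : ℝ => Real.sqrt ((y + η - 1) ^ 2 + 4 * η))
        (2 * (x + η - 1) / (2 * S)) x := hpoly.sqrt hp.ne'
    have hterm1 : HasDerivAt (fun y : ℝ => y / Real.sqrt ((y + η - 1) ^ 2 + 4 * η))
        ((1 * S - x * (2 * (x + η - 1) / (2 * S))) / S ^ 2) x :=
      (hasDerivAt_id x).div hsqrt hS.ne'
    have hinner : HasDerivAt
        (fun y : ℝ => (y + η - 1 + Real.sqrt ((y + η - 1) ^ 2 + 4 * η)) / (2 * η))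
        ((1 + 2 * (x + η - 1) / (2 * S)) / (2 * η)) x :=
      (h1.add hsqrt).div_const (2 * η)
    have hargpos : 0 < (x + η - 1 + S) / (2 * η) := by positivity
    have hlog : HasDerivAt
        (fun y : ℝ => Real.log ((y + η - 1 + Real.sqrt ((y + η - 1) ^ 2 + 4 * η)) / (2 * η)))
        ((1 + 2 * (x + η - 1) / (2 * S)) / (2 * η) / ((x + η - 1 + S) / (2 * η))) x :=
      hinner.log hargpos.ne'
    have := hterm1.sub hlog
    refine this.congr_deriv ?_
    have huS : 0 < x + η - 1 + S := by positivity
    field_simp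
    ring
  have mono : StrictAntiOn g (Ici 1) := by
    apply strictAntiOn_of_deriv_neg (convex_Ici 1)
    · exact fun x hx => (key x hx).continuousAt.continuousWithinAt
    · intro x hx
      rw [interior_Ici] at hx
      rw [(key x hx.le).deriv]
      have hu : 0 < x + η - 1 := by linarith [hx.out]
      have hx0 : 0 < x := by linarith [hx.out]
      have hp : 0 < (x + η - 1) ^ 2 + 4 * η := by positivity
      have hS : 0 < Real.sqrt ((x + η - 1) ^ 2 + 4 * η) := Real.sqrt_pos.mpr hp
      apply div_neg_of_neg_of_pos
      · nlinarith
      · positivity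
  have zero : ∀ x : ℝ, 1 < x →
      1 / (x * Real.sqrt ((x + η - 1) ^ 2 + 4 * η)) =
        (1 / x ^ 2) *
          Real.log ((x + η - 1 + Real.sqrt ((x + η - 1) ^ 2 + 4 * η)) / (2 * η)) →
      g x = 0 := by
    intro x hx h
    have hu : 0 < x + η - 1 := by linarith
    have hp : 0 < (x + η - 1) ^ 2 + 4 * η := by positivity
    have hS : 0 < Real.sqrt ((x + η - 1) ^ 2 + 4 * η) := Real.sqrt_pos.mpr hp
    have hx0 : 0 < x := by linarith
    simp only [hg]
    field_simp at h ⊢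
    nlinarith [h]
  have e1 := zero x₁ hx₁ h₁
  have e2 := zero x₂ hx₂ h₂
  exact mono.injOn (mem_Ici.mpr hx₁.le) (mem_Ici.mpr hx₂.le) (e1.trans e2.symm)
end
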